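/- arXiv:1004.4237 — 5 statements merged into one kernel-verified Lean document; each statement's English description precedes it below -/
import Mathlib

section
/- For variables γ = (γ_1,…,γ_n) and F_γ(t,u) = ∏_{i=1}^n (1 + u·e^{γ_i t}) in ℚ(γ)[[u,t]], the power series F_γ((1+u)t, u)/(1+u)^n has the property that its t^k-coefficient is a polynomial in u of degree at most k, for every k. -/
open PowerSeries

variable {K : Type*}

/-- The exponential-type series `e^{ct} = Σ_m c^m t^m / m!` over `K`. -/
noncomputable def expSeries' [Field K] (c : K) : PowerSeries K :=
  PowerSeries.mk fun m => c ^ m / (m.factorial : K)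

/-- `F_γ((1+u)t, u) = ∏_{i=1}^n (1 + u e^{γ_i (1+u) t})`, as a power series in `t`
(outer variable) with coefficients in `K[[u]]` (inner variable `u`). -/
noncomputable def Fsub [Field K] {n : ℕ} (γ : Fin n → K) :
    PowerSeries (PowerSeries K) :=
  ∏ i : Fin n, (1 + PowerSeries.mk fun m =>
    (PowerSeries.X : PowerSeries K) * (1 + PowerSeries.X) ^ m *
      PowerSeries.C (R := K) (γ i ^ m / (m.factorial : K)))

/-! The power series in `t` over `K[[u]]` whose `t^k`-coefficient is a polynomial in `u` of
degree at most `k` form a subsemiring, because degrees add under the Cauchy product. Dividing by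
`(1+u)^n` distributes over the `n` factors of `F_γ((1+u)t, u)`, and each factor
`(1 + u e^{γ(1+u)t}) / (1+u)` lies in that subsemiring: its `t^0`-coefficient is `1` and its
`t^k`-coefficient for `k ≥ 1` is `u (1+u)^(k-1) γ^k / k!`. -/

section

variable (R : Type*) [CommSemiring R]

def degreeLECoeffSubsemiring : Subsemiring (PowerSeries (PowerSeries R)) where
  carrier := {F | ∀ k : ℕ, ∃ p : Polynomial R, p.degree ≤ k ∧ coeff k F = p}
  zero_mem' k := ⟨0, by simp, by simp⟩
  one_mem' k := by
    refine ⟨if k = 0 then 1 else 0, ?_, ?_⟩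
    · split_ifs with hk
      · simp [hk]
      · simp
    · rw [coeff_one]; split_ifs <;> simp
  add_mem' {F G} hF hG k := by
    obtain ⟨p, hp, hpF⟩ := hF k
    obtain ⟨q, hq, hqG⟩ := hG k
    exact ⟨p + q, (Polynomial.degree_add_le_of_le hp hq).trans_eq (max_self _), by simp [hpF, hqG]⟩
  mul_mem' {F G} hF hG k := by
    choose p hp hpF using hF
    choose q hq hqG using hG
    refine ⟨∑ ij ∈ Finset.HasAntidiagonal.antidiagonal k, p ij.1 * q ij.2, ?_, ?_⟩
    · refine (Polynomial.degree_sum_le _ _).trans (Finset.sup_le fun ij hij => ?_)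
      rw [← Finset.HasAntidiagonal.mem_antidiagonal.mp hij, Nat.cast_add]
      exact Polynomial.degree_mul_le_of_le (hp _) (hq _)
    · rw [coeff_mul, ← Polynomial.coeToPowerSeries.ringHom_apply, map_sum]
      simp [hpF, hqG]

variable {R}

theorem mem_degreeLECoeffSubsemiring {F : PowerSeries (PowerSeries R)} :
    F ∈ degreeLECoeffSubsemiring R ↔
      ∀ k : ℕ, ∃ p : Polynomial R, p.degree ≤ k ∧ coeff k F = p :=
  Iff.rfl

end

section

variable [Field K]

theorem inv_one_add_X_mul_self : (1 + X : PowerSeries K)⁻¹ * (1 + X) = 1 :=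
  PowerSeries.inv_mul_cancel _ (by simp)

theorem PowerSeries.inv_pow (φ : PowerSeries K) (n : ℕ) : (φ ^ n)⁻¹ = φ⁻¹ ^ n := by
  induction n with
  | zero => simp
  | succ n ih => rw [pow_succ, PowerSeries.mul_inv_rev, ih, pow_succ']

theorem C_inv_one_add_X_mul_mem_degreeLECoeffSubsemiring {a : ℕ → K} (ha : a 0 = 1) :
    C ((1 + X : PowerSeries K)⁻¹) *
        (1 + mk fun m => (X : PowerSeries K) * (1 + X) ^ m * C (a m)) ∈
      degreeLECoeffSubsemiring K := by
  rintro (_ | j)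
  · refine ⟨1, by simp, ?_⟩
    simp [coeff_C_mul, ha]
  · refine ⟨Polynomial.X * (1 + Polynomial.X) ^ j * Polynomial.C (a (j + 1)), ?_, ?_⟩
    · compute_degree!
      rw [add_comm]
      exact le_rfl
    · simp only [coeff_C_mul, map_add, coeff_one, coeff_mk, Nat.add_one_ne_zero, if_false,
        zero_add, Polynomial.coe_mul, Polynomial.coe_pow, Polynomial.coe_add, Polynomial.coe_one,
        Polynomial.coe_X, Polynomial.coe_C, pow_succ]
      linear_combination (X * (1 + X) ^ j * C (a (j + 1))) * inv_one_add_X_mul_self (K := K)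

end

theorem Fsub_div_mem_S_general [Field K] {n : ℕ} (γ : Fin n → K) :
    ∀ k : ℕ, ∃ p : Polynomial K, p.degree ≤ (k : ℕ) ∧
      PowerSeries.coeff (R := PowerSeries K) k
        (PowerSeries.C (R := PowerSeries K)
            (((1 + PowerSeries.X : PowerSeries K) ^ n)⁻¹) * Fsub γ)
        = (p : PowerSeries K) := by
  rw [← mem_degreeLECoeffSubsemiring, PowerSeries.inv_pow, map_pow, Fsub]
  convert Subsemiring.prod_mem _ fun i _ =>
    C_inv_one_add_X_mul_mem_degreeLECoeffSubsemiring (a := fun m => γ i ^ m / m.factorial) (by simp)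
  rw [Finset.prod_mul_distrib, Finset.prod_const, Finset.card_univ, Fintype.card_fin]

/-- each `t^k`-coefficient of `F_γ((1+u)t,u)/(1+u)^n` is a polynomial
in `u` of degree at most `k`. -/
theorem Fsub_div_mem_S [Field K] [CharZero K] {n : ℕ} (γ : Fin n → K) :
    ∀ k : ℕ, ∃ p : Polynomial K, p.degree ≤ (k : ℕ) ∧
      PowerSeries.coeff (R := PowerSeries K) k
        (PowerSeries.C (R := PowerSeries K)
            (((1 + PowerSeries.X : PowerSeries K) ^ n)⁻¹) * Fsub γ)
        = (p : PowerSeries K) :=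
  Fsub_div_mem_S_general γ
end

section
/- With F_γ(t,u) = ∏_{i=1}^n (1 + u·e^{γ_i t}), the evaluation of F_γ((1+u)t, u)/(1+u)^n at u = −1 equals E_γ(−t) = ∏_{i=1}^n (1 − γ_i t). (Here the evaluation is meaningful because each t^k-coefficient is a polynomial in u.) -/
/-! Substitute `u = v - 1`: then `1 + u e^{γ(1+u)t} = v (1 + (v - 1) ∑_{m ≥ 1} v^{m-1} (γt)^m / m!)`,
so dividing by `(1+u)^n = v^n` leaves a product whose `t^k`-coefficients are polynomials in `v`,
and at `v = 0` each factor collapses to `1 - γt`. For the substitution the `t^k`-coefficients of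
`F_γ((1+u)t, u)` are taken in `K[u]` rather than `K⟦u⟧`. -/

open PowerSeries

variable {K : Type*}

section ShiftedFactor

variable {R : Type*} [CommRing R]

/-- `1 + u A((1+u)t)` for `A(t) = ∑ a_m t^m`, with coefficients in `R[u]`. -/
noncomputable def factorPoly (a : ℕ → R) : PowerSeries (Polynomial R) :=
  1 + PowerSeries.mk fun m => Polynomial.X * (1 + Polynomial.X) ^ m * Polynomial.C (a m)

noncomputable def shiftedFactorPoly (a : ℕ → R) : PowerSeries (Polynomial R) :=
  PowerSeries.mk fun m =>
    if m = 0 then 1 else (Polynomial.X - 1) * Polynomial.X ^ (m - 1) * Polynomial.C (a m)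

theorem map_compRingHom_factorPoly {a : ℕ → R} (ha : a 0 = 1) :
    PowerSeries.map (Polynomial.compRingHom (Polynomial.X - 1)) (factorPoly a) =
      PowerSeries.C Polynomial.X * shiftedFactorPoly a := by
  ext m : 1
  rw [PowerSeries.coeff_map, PowerSeries.coeff_C_mul]
  rcases m with _ | m
  · simp [factorPoly, shiftedFactorPoly, ha]
  · simp [factorPoly, shiftedFactorPoly, PowerSeries.coeff_one, pow_succ]
    ring

theorem map_compRingHom_prod_factorPoly {ι : Type*} (s : Finset ι) {a : ι → ℕ → R}
    (ha : ∀ i ∈ s, a i 0 = 1) :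
    PowerSeries.map (Polynomial.compRingHom (Polynomial.X - 1)) (∏ i ∈ s, factorPoly (a i)) =
      PowerSeries.C (Polynomial.X ^ s.card) * ∏ i ∈ s, shiftedFactorPoly (a i) := by
  rw [map_prod, map_pow, ← Finset.prod_const, ← Finset.prod_mul_distrib]
  exact Finset.prod_congr rfl fun i hi => map_compRingHom_factorPoly (ha i hi)

theorem map_evalRingHom_zero_shiftedFactorPoly (a : ℕ → R) :
    PowerSeries.map (Polynomial.evalRingHom 0) (shiftedFactorPoly a) =
      1 - PowerSeries.C (a 1) * PowerSeries.X := by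
  ext (_ | _ | m) : 1 <;> simp [shiftedFactorPoly, PowerSeries.coeff_one, pow_succ]

end ShiftedFactor

theorem map_coe_prod_factorPoly [Field K] {n : ℕ} (γ : Fin n → K) :
    PowerSeries.map Polynomial.coeToPowerSeries.ringHom
        (∏ i, factorPoly fun m => γ i ^ m / (m.factorial : K)) = Fsub γ := by
  rw [Fsub, map_prod]
  refine Finset.prod_congr rfl fun i _ => ?_
  ext m : 1
  simp [factorPoly]

theorem Polynomial.coeff_eq_mul_of_coeff_C_inv_mul_map_coe [Field K]
    {G : PowerSeries (Polynomial K)} {v q : Polynomial K} (hv : v.coeff 0 ≠ 0) {k : ℕ}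
    (h : PowerSeries.coeff k (PowerSeries.C ((v : PowerSeries K)⁻¹) *
        PowerSeries.map Polynomial.coeToPowerSeries.ringHom G) = q) :
    PowerSeries.coeff k G = v * q := by
  have hv' : PowerSeries.constantCoeff (v : PowerSeries K) ≠ 0 := by simpa using hv
  rw [← Polynomial.coe_inj, Polynomial.coe_mul, ← h, PowerSeries.coeff_C_mul, ← mul_assoc,
    PowerSeries.mul_inv_cancel _ hv', one_mul, PowerSeries.coeff_map]
  rfl

theorem Fsub_div_eval_neg_one_general [Field K] {n : ℕ} (γ : Fin n → K)
    (p : ℕ → Polynomial K)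
    (hp : ∀ k : ℕ, PowerSeries.coeff (R := PowerSeries K) k
        (PowerSeries.C (R := PowerSeries K)
            (((1 + PowerSeries.X : PowerSeries K) ^ n)⁻¹) * Fsub γ)
        = (p k : PowerSeries K)) :
    (PowerSeries.mk fun k => (p k).eval (-1)) =
      ∏ i : Fin n, (1 - PowerSeries.C (R := K) (γ i) * PowerSeries.X) := by
  set a : Fin n → ℕ → K := fun i m => γ i ^ m / (m.factorial : K)
  have hG : ∀ k, PowerSeries.coeff k (∏ i, factorPoly (a i)) = (1 + Polynomial.X) ^ n * p k :=
    fun k => Polynomial.coeff_eq_mul_of_coeff_C_inv_mul_map_coe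
      (by simp [Polynomial.coeff_zero_eq_eval_zero]) (by
        rw [map_coe_prod_factorPoly]
        simpa using hp k)
  have hshift : ∀ k, (p k).comp (Polynomial.X - 1) =
      PowerSeries.coeff k (∏ i, shiftedFactorPoly (a i)) := by
    intro k
    have h := congrArg (Polynomial.compRingHom (Polynomial.X - 1)) (hG k)
    rw [← PowerSeries.coeff_map, map_compRingHom_prod_factorPoly _ (by simp [a]),
      PowerSeries.coeff_C_mul, map_mul, map_pow] at h
    simpa using h.symm
  have hE : ∏ i, (1 - PowerSeries.C (γ i) * PowerSeries.X) =
      PowerSeries.map (Polynomial.evalRingHom 0) (∏ i, shiftedFactorPoly (a i)) := by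
    simp [map_prod, map_evalRingHom_zero_shiftedFactorPoly, a]
  ext k
  rw [hE, PowerSeries.coeff_mk, PowerSeries.coeff_map, ← hshift]
  simp

/-- if the `t^k`-coefficients of `F_γ((1+u)t,u)/(1+u)^n` are the
polynomials `p k` in `u`, then evaluating them at `u = -1` yields
`E_γ(-t) = ∏_{i=1}^n (1 - γ_i t)`. -/
theorem Fsub_div_eval_neg_one [Field K] [CharZero K] {n : ℕ} (γ : Fin n → K)
    (p : ℕ → Polynomial K)
    (hp : ∀ k : ℕ, PowerSeries.coeff (R := PowerSeries K) k
        (PowerSeries.C (R := PowerSeries K)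
            (((1 + PowerSeries.X : PowerSeries K) ^ n)⁻¹) * Fsub γ)
        = (p k : PowerSeries K)) :
    (PowerSeries.mk fun k => (p k).eval (-1)) =
      ∏ i : Fin n, (1 - PowerSeries.C (R := K) (γ i) * PowerSeries.X) :=
  Fsub_div_eval_neg_one_general γ p hp
end

section
/- Let α = (α_1,…,α_n) and β = (β_1,…,β_{n−r}) be two sets of variables, and set C(t,u) = F_α(t,u)/F_β(t,u) where F_γ(t,u) = ∏ (1+u·e^{γ_i t}). Then C(t,u) can be written as Σ_{k≥0} (1+u)^{r−k} a_k(u) t^k where each a_k(u) ∈ ℚ(α,β)[u] is a polynomial in u of degree at most k, and moreover Σ_{k≥0} a_k(−1) t^k = E_α(−t)·H_β(t), where E_α(t) = ∏_{i=1}^n (1+α_i t) and H_β(t) = ∏_{i=1}^{n−r} (1−β_i t)^{−1}. -/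
open PowerSeries

variable {K : Type*}

/-- `F_γ(t, u) = ∏_{i=1}^n (1 + u e^{γ_i t})`, as a power series in `t`
(outer variable) with coefficients in `K[[u]]` (inner variable `u`). -/
noncomputable def Fser [Field K] {n : ℕ} (γ : Fin n → K) :
    PowerSeries (PowerSeries K) :=
  ∏ i : Fin n, (1 + PowerSeries.mk fun m =>
    (PowerSeries.X : PowerSeries K) * PowerSeries.C (γ i ^ m / (m.factorial : K)))

/-!
Substituting `t ↦ (1+u)t` turns the factor `1 + u e^{γt}` into `(1+u)·A_γ`, where `A_γ` has
constant term `1` and `t^k`-coefficient `u(1+u)^{k-1}γ^k/k!`, a polynomial in `u` of degree `k`.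
Series whose `t^k`-coefficient is a polynomial in `u` of degree `≤ k` form a subring, which
contains the quotient of two of its elements when the divisor has constant term `1`. Hence
`C((1+u)t, u) = (1+u)^r ∏ A_{α_i} / ∏ A_{β_j}` with the quotient in that subring, and setting
`u = -1` coefficientwise, a ring homomorphism, sends `A_γ` to `1 - γt`.
-/

section BoundedDegree

open Finset.HasAntidiagonal

variable (R : Type*) [CommRing R]

def boundedDegreeSeries : Subring (PowerSeries (Polynomial R)) where
  carrier := {f | ∀ k, (coeff k f).degree ≤ k}
  zero_mem' k := by simp
  one_mem' k := by
    rw [coeff_one]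
    split_ifs with hk
    · simp [hk]
    · simp
  add_mem' hf hg k := (Polynomial.degree_add_le _ _).trans (max_le (hf k) (hg k))
  neg_mem' hf k := (Polynomial.degree_neg _).le.trans (hf k)
  mul_mem' {f g} hf hg k := by
    rw [coeff_mul]
    refine (Polynomial.degree_sum_le _ _).trans (Finset.sup_le fun p hp => ?_)
    refine (Polynomial.degree_mul_le _ _).trans ?_
    rw [← (mem_antidiagonal.mp hp), Nat.cast_add]
    exact add_le_add (hf p.1) (hg p.2)

variable {R}

theorem mem_boundedDegreeSeries_of_mul_mem {f g : PowerSeries (Polynomial R)}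
    (hf : f ∈ boundedDegreeSeries R) (hf0 : constantCoeff f = 1)
    (hfg : f * g ∈ boundedDegreeSeries R) : g ∈ boundedDegreeSeries R := by
  intro k
  induction k using Nat.strong_induction_on with
  | _ k ih =>
    cases k with
    | zero => simpa [coeff_mul, hf0] using hfg 0
    | succ k =>
      have hcoeff : coeff (k + 1) g = coeff (k + 1) (f * g) -
          ∑ p ∈ antidiagonal k, coeff (p.1 + 1) f * coeff p.2 g := by
        rw [coeff_mul, Finset.Nat.sum_antidiagonal_succ, coeff_zero_eq_constantCoeff, hf0]
        ring
      rw [hcoeff]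
      refine (Polynomial.degree_sub_le _ _).trans (max_le (hfg _) ?_)
      refine (Polynomial.degree_sum_le _ _).trans (Finset.sup_le fun p hp => ?_)
      have hpk := mem_antidiagonal.mp hp
      refine (Polynomial.degree_mul_le _ _).trans ?_
      calc (coeff (p.1 + 1) f).degree + (coeff p.2 g).degree
          ≤ ((p.1 + 1 : ℕ) : WithBot ℕ) + (p.2 : ℕ) := add_le_add (hf _) (ih _ (by omega))
        _ = (k + 1 : ℕ) := by rw [← hpk]; norm_cast; ring

end BoundedDegree

section Factor

variable [Field K]

/-- The series `A_γ`. -/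
noncomputable def reducedFactor (γ : K) : PowerSeries (Polynomial K) :=
  mk fun
    | 0 => 1
    | k + 1 => Polynomial.X * (1 + Polynomial.X) ^ k *
        Polynomial.C (γ ^ (k + 1) / ((k + 1).factorial : K))

theorem reducedFactor_mem (γ : K) : reducedFactor γ ∈ boundedDegreeSeries K := by
  rintro (_ | k)
  · simp [reducedFactor]
  · simp only [reducedFactor, coeff_mk]
    compute_degree
    rw [add_comm]; exact_mod_cast le_rfl

theorem constantCoeff_reducedFactor (γ : K) : constantCoeff (reducedFactor γ) = 1 := by
  simp [reducedFactor, ← coeff_zero_eq_constantCoeff_apply]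

theorem rescale_expFactor (γ : K) :
    rescale (1 + X : K⟦X⟧) (1 + mk fun m => X * C (γ ^ m / (m.factorial : K))) =
      C (1 + X : K⟦X⟧) * map Polynomial.coeToPowerSeries.ringHom (reducedFactor γ) := by
  ext k : 1
  rw [coeff_rescale, coeff_C_mul, coeff_map, map_add, coeff_mk, reducedFactor, coeff_mk]
  rcases k with _ | k
  · simp
  · simp only [Polynomial.coeToPowerSeries.ringHom_apply, Polynomial.coe_mul, Polynomial.coe_pow,
      Polynomial.coe_add, Polynomial.coe_one, Polynomial.coe_X, Polynomial.coe_C, coeff_one]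
    rw [if_neg k.succ_ne_zero, zero_add, pow_succ]
    ring

theorem map_eval_neg_one_reducedFactor (γ : K) :
    map (Polynomial.evalRingHom (-1)) (reducedFactor γ) = 1 - C γ * X := by
  ext (_ | _ | k) : 1
  · simp [reducedFactor]
  · simp [reducedFactor]
  · simp [reducedFactor, coeff_one]

end Factor

section Product

variable [Field K] {n : ℕ}

noncomputable def Fpoly (γ : Fin n → K) : PowerSeries (Polynomial K) :=
  ∏ i, reducedFactor (γ i)

theorem Fpoly_mem (γ : Fin n → K) : Fpoly γ ∈ boundedDegreeSeries K :=
  prod_mem fun i _ => reducedFactor_mem (γ i)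

theorem constantCoeff_Fpoly (γ : Fin n → K) : constantCoeff (Fpoly γ) = 1 := by
  simp [Fpoly, constantCoeff_reducedFactor]

theorem rescale_Fser (γ : Fin n → K) :
    rescale (1 + X : K⟦X⟧) (Fser γ) =
      C ((1 + X : K⟦X⟧) ^ n) * map Polynomial.coeToPowerSeries.ringHom (Fpoly γ) := by
  simp only [Fser, Fpoly, map_prod, rescale_expFactor, Finset.prod_mul_distrib,
    Finset.prod_const, Finset.card_univ, Fintype.card_fin, map_pow]

theorem map_eval_neg_one_Fpoly (γ : Fin n → K) :
    map (Polynomial.evalRingHom (-1)) (Fpoly γ) = ∏ i, (1 - C (γ i) * X) := by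
  simp only [Fpoly, map_prod, map_eval_neg_one_reducedFactor]

end Product

theorem eq_mk_of_rescale_eq [Field K] {f : K⟦X⟧⟦X⟧} {c : K⟦X⟧} {A : (Polynomial K)⟦X⟧}
    (h : rescale (1 + X) f = C c * map Polynomial.coeToPowerSeries.ringHom A) :
    f = mk fun k => c * ((1 + X) ^ k)⁻¹ * ((coeff k A : Polynomial K) : K⟦X⟧) := by
  ext k : 1
  have hk := congrArg (coeff k) h
  rw [coeff_rescale, coeff_C_mul, coeff_map] at hk
  have hunit : ((1 + X : K⟦X⟧) ^ k)⁻¹ * (1 + X) ^ k = 1 :=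
    PowerSeries.inv_mul_cancel _ (by simp)
  rw [coeff_mk, mul_right_comm, ← Polynomial.coeToPowerSeries.ringHom_apply, ← hk, mul_comm,
    ← mul_assoc, hunit, one_mul]

theorem Cser_structure_general [Field K] {n r : ℕ} (hrn : r ≤ n)
    (α : Fin n → K) (β : Fin (n - r) → K)
    (Cser : PowerSeries (PowerSeries K))
    (hC : Fser α = Fser β * Cser) :
    ∃ a : ℕ → Polynomial K,
      (∀ k : ℕ, (a k).degree ≤ (k : ℕ)) ∧
      Cser = (PowerSeries.mk fun k =>
        (1 + PowerSeries.X : PowerSeries K) ^ r *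
          ((1 + PowerSeries.X : PowerSeries K) ^ k)⁻¹ * ((a k : Polynomial K) : PowerSeries K)) ∧
      (PowerSeries.mk fun k => (a k).eval (-1)) *
          (∏ j : Fin (n - r), (1 - PowerSeries.C (β j) * PowerSeries.X)) =
        ∏ i : Fin n, (1 - PowerSeries.C (α i) * PowerSeries.X) := by
  have hβ : IsUnit (Fpoly β) := isUnit_iff_constantCoeff.mpr (by simp [constantCoeff_Fpoly])
  obtain ⟨A, hβA⟩ := hβ.dvd (a := Fpoly α)
  have hA : A ∈ boundedDegreeSeries K := mem_boundedDegreeSeries_of_mul_mem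
    (Fpoly_mem β) (constantCoeff_Fpoly β) (hβA ▸ Fpoly_mem α)
  have hrescale : rescale (1 + X) Cser =
      C ((1 + X : K⟦X⟧) ^ r) * map Polynomial.coeToPowerSeries.ringHom A := by
    have hunit : IsUnit (C ((1 + X : K⟦X⟧) ^ (n - r)) *
        map Polynomial.coeToPowerSeries.ringHom (Fpoly β)) :=
      (((isUnit_iff_constantCoeff.mpr (by simp)).pow _).map C).mul (hβ.map _)
    have hpow : (1 + X : K⟦X⟧) ^ n = (1 + X) ^ (n - r) * (1 + X) ^ r := by
      rw [← pow_add, Nat.sub_add_cancel hrn]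
    refine hunit.mul_left_cancel ?_
    calc _ = rescale (1 + X) (Fser β * Cser) := by rw [map_mul, rescale_Fser]
      _ = C ((1 + X : K⟦X⟧) ^ n) * map Polynomial.coeToPowerSeries.ringHom (Fpoly β * A) := by
        rw [← hC, rescale_Fser, ← hβA]
      _ = _ := by rw [hpow, map_mul, map_mul]; ring
  refine ⟨fun k => coeff k A, hA, eq_mk_of_rescale_eq hrescale, ?_⟩
  have heval := congrArg (map (Polynomial.evalRingHom (-1))) hβA.symm
  rw [map_mul, map_eval_neg_one_Fpoly, map_eval_neg_one_Fpoly, mul_comm] at heval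
  rw [← heval]
  congr 1
  ext k
  simp

/-- write `C(t,u) = F_α(t,u)/F_β(t,u)` (i.e. `F_α = F_β ⬝ Cser`).
Then `C(t,u) = Σ_k (1+u)^{r-k} a_k(u) t^k` with `deg a_k ≤ k`, and
`Σ_k a_k(-1) t^k = E_α(-t) H_β(t)`, i.e.
`(Σ_k a_k(-1) t^k) ⬝ ∏_j (1-β_j t) = ∏_i (1-α_i t)`. -/
theorem Cser_structure [Field K] [CharZero K] {n r : ℕ} (hrn : r ≤ n)
    (α : Fin n → K) (β : Fin (n - r) → K)
    (Cser : PowerSeries (PowerSeries K))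
    (hC : Fser α = Fser β * Cser) :
    ∃ a : ℕ → Polynomial K,
      (∀ k : ℕ, (a k).degree ≤ (k : ℕ)) ∧
      Cser = (PowerSeries.mk fun k =>
        (1 + PowerSeries.X : PowerSeries K) ^ r *
          ((1 + PowerSeries.X : PowerSeries K) ^ k)⁻¹ * ((a k : Polynomial K) : PowerSeries K)) ∧
      (PowerSeries.mk fun k => (a k).eval (-1)) *
          (∏ j : Fin (n - r), (1 - PowerSeries.C (β j) * PowerSeries.X)) =
        ∏ i : Fin n, (1 - PowerSeries.C (α i) * PowerSeries.X) :=
  Cser_structure_general hrn α β Cser hC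
end

section
/- Let A = ℚ(α,β)[t]/(t^{d+1}) and let C̄(t,u) denote the image in A[[u]] of C(t,u) = F_α(t,u)/F_β(t,u), where α has n variables and β has n−r variables with r ≥ d. Then C̄(t,u) is a polynomial in u of degree at most r. -/
/-!
Substituting `t ↦ (1 + u) t` turns each factor `1 + u e^{γ t}` into `(1 + u) g(t, u)`, where the
coefficient of `t^k` in `g` is a polynomial in `u` of degree at most `k`. Series with this property
form a subring of `K[[u]][[t]]`, and those with constant term `1` are invertible inside it. Hence
`C((1 + u) t, u) = (1 + u)^r H(t, u)` with `H` in that subring, i.e. the coefficient of `t^k` in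
`C` is `(1 + u)^(r - k) a_k(u)` with `deg a_k ≤ k`, which has degree at most `r` once `k ≤ r`.
-/

open PowerSeries

variable {K : Type*}

namespace PowerSeries

variable {R : Type*} [CommRing R]

variable (R) in
def degreeLE (k : ℕ) : Submodule R R⟦X⟧ where
  carrier := {p | ∀ m, k < m → coeff m p = 0}
  add_mem' hp hq m hm := by simp [hp m hm, hq m hm]
  zero_mem' m _ := by simp
  smul_mem' c p hp m hm := by simp [hp m hm]

theorem degreeLE_mono {k l : ℕ} (h : k ≤ l) : degreeLE R k ≤ degreeLE R l :=
  fun _ hp m hm => hp m (h.trans_lt hm)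

theorem C_mem_degreeLE_zero (c : R) : C c ∈ degreeLE R 0 := fun m hm => by
  simp [coeff_C, hm.ne']

theorem one_mem_degreeLE_zero : (1 : R⟦X⟧) ∈ degreeLE R 0 := by
  simpa using C_mem_degreeLE_zero (1 : R)

theorem X_mem_degreeLE_one : (X : R⟦X⟧) ∈ degreeLE R 1 := fun m hm => by
  simp [coeff_X, hm.ne']

theorem one_add_X_ne_zero [Nontrivial R] : (1 + X : R⟦X⟧) ≠ 0 := fun h => by
  simpa using congrArg constantCoeff h

theorem mul_mem_degreeLE {k l : ℕ} {p q : R⟦X⟧} (hp : p ∈ degreeLE R k) (hq : q ∈ degreeLE R l) :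
    p * q ∈ degreeLE R (k + l) := by
  intro m hm
  rw [coeff_mul]
  refine Finset.sum_eq_zero fun ⟨i, j⟩ hij => ?_
  rw [Finset.HasAntidiagonal.mem_antidiagonal] at hij
  rcases le_or_gt i k with hi | hi
  · simp [hq j (by omega)]
  · simp [hp i hi]

theorem one_add_X_pow_mem_degreeLE (k : ℕ) : (1 + X : R⟦X⟧) ^ k ∈ degreeLE R k := by
  induction k with
  | zero => simpa using one_mem_degreeLE_zero
  | succ k ih =>
    have h1 : (1 + X : R⟦X⟧) ∈ degreeLE R 1 :=
      add_mem (degreeLE_mono zero_le_one one_mem_degreeLE_zero) X_mem_degreeLE_one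
    simpa [pow_succ] using mul_mem_degreeLE ih h1

variable (R) in
/-- The series of weighted degree `≤ 0` when `u` has weight `1` and `t` has weight `-1`. -/
def coeffDegreeLESubring : Subring R⟦X⟧⟦X⟧ where
  carrier := {G | ∀ k, coeff k G ∈ degreeLE R k}
  mul_mem' {G H} hG hH k := by
    rw [coeff_mul]
    refine sum_mem fun ⟨i, j⟩ hij => ?_
    rw [Finset.HasAntidiagonal.mem_antidiagonal] at hij
    simpa [hij] using mul_mem_degreeLE (hG i) (hH j)
  one_mem' k := by
    rcases k with _ | k
    · simpa using one_mem_degreeLE_zero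
    · simp
  add_mem' hG hH k := by simpa using add_mem (hG k) (hH k)
  zero_mem' k := by simp
  neg_mem' hG k := by simpa using neg_mem (hG k)

theorem mem_coeffDegreeLESubring_of_mul_mem {A G : R⟦X⟧⟦X⟧} (hG : G ∈ coeffDegreeLESubring R)
    (hG₀ : constantCoeff G = 1) (hAG : A * G ∈ coeffDegreeLESubring R) :
    A ∈ coeffDegreeLESubring R := by
  intro k
  induction k using Nat.strong_induction_on with
  | _ k ih =>
  have hsplit : coeff k (A * G) =
      ∑ i ∈ Finset.range k, coeff i A * coeff (k - i) G + coeff k A := by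
    rw [coeff_mul, Finset.Nat.sum_antidiagonal_eq_sum_range_succ_mk, Finset.sum_range_succ,
      Nat.sub_self, coeff_zero_eq_constantCoeff_apply, hG₀, mul_one]
  have hlower : ∑ i ∈ Finset.range k, coeff i A * coeff (k - i) G ∈ degreeLE R k := by
    refine sum_mem fun i hi => ?_
    have hik : i < k := Finset.mem_range.mp hi
    simpa [Nat.add_sub_cancel' hik.le] using mul_mem_degreeLE (ih i hik) (hG (k - i))
  simpa [hsplit] using sub_mem (hAG k) hlower

theorem invOfUnit_mem_coeffDegreeLESubring {G : R⟦X⟧⟦X⟧} (hG : G ∈ coeffDegreeLESubring R)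
    (hG₀ : constantCoeff G = 1) : invOfUnit G 1 ∈ coeffDegreeLESubring R :=
  mem_coeffDegreeLESubring_of_mul_mem hG hG₀ (by simp [hG₀, one_mem])

theorem exists_rescale_one_add_X_mul_mk_eq (c : ℕ → R) (hc : c 0 = 1) :
    ∃ g ∈ coeffDegreeLESubring R, constantCoeff g = 1 ∧
      rescale (1 + X) (1 + mk fun m => (X : R⟦X⟧) * C (c m)) = C (1 + X) * g := by
  refine ⟨mk fun m => if m = 0 then 1 else X * C (c m) * (1 + X) ^ (m - 1), ?_, by simp, ?_⟩
  · intro m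
    rcases m with _ | m
    · simpa using one_mem_degreeLE_zero
    · simpa [add_comm 1 m] using
        mul_mem_degreeLE (mul_mem_degreeLE X_mem_degreeLE_one (C_mem_degreeLE_zero (c (m + 1))))
          (one_add_X_pow_mem_degreeLE m)
  · ext1 m
    rw [coeff_rescale, coeff_C_mul, map_add, coeff_mk, coeff_mk, coeff_one]
    rcases m with _ | m
    · simp [hc]
    · simp [pow_succ]
      ring

theorem mem_degreeLE_of_one_add_X_pow_mul_eq [IsDomain R] {k r : ℕ} (hkr : k ≤ r)
    {p q : R⟦X⟧} (hq : q ∈ degreeLE R k) (h : (1 + X) ^ k * p = (1 + X) ^ r * q) :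
    p ∈ degreeLE R r := by
  have hp : p = (1 + X) ^ (r - k) * q := by
    refine mul_left_cancel₀ (pow_ne_zero k one_add_X_ne_zero) ?_
    rw [h, ← mul_assoc, ← pow_add, Nat.add_sub_cancel' hkr]
  simpa [hp, Nat.sub_add_cancel hkr] using mul_mem_degreeLE (one_add_X_pow_mem_degreeLE (r - k)) hq

end PowerSeries

theorem exists_rescale_Fser_eq [Field K] {n : ℕ} (γ : Fin n → K) :
    ∃ G ∈ coeffDegreeLESubring K, constantCoeff G = 1 ∧
      rescale (1 + X) (Fser γ) = C ((1 + X) ^ n) * G := by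
  choose g hg hg₀ hfac using fun i : Fin n =>
    exists_rescale_one_add_X_mul_mk_eq (fun m => γ i ^ m / (m.factorial : K)) (by simp)
  refine ⟨∏ i, g i, prod_mem fun i _ => hg i, by simp [hg₀], ?_⟩
  simp [Fser, map_prod, hfac, Finset.prod_mul_distrib]

theorem Cser_trunc_polynomial_in_u_general [Field K] {n r d : ℕ}
    (hrn : r ≤ n) (hdr : d ≤ r)
    (α : Fin n → K) (β : Fin (n - r) → K)
    (Cser : PowerSeries (PowerSeries K))
    (hC : Fser α = Fser β * Cser) :
    ∀ k ≤ d, ∀ m : ℕ, r < m →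
      PowerSeries.coeff m (PowerSeries.coeff k Cser) = 0 := by
  obtain ⟨Gα, hGα, -, hα⟩ := exists_rescale_Fser_eq α
  obtain ⟨Gβ, hGβ, hGβ₀, hβ⟩ := exists_rescale_Fser_eq β
  set H := Gα * invOfUnit Gβ 1
  have hH : H ∈ coeffDegreeLESubring K :=
    mul_mem hGα (invOfUnit_mem_coeffDegreeLESubring hGβ hGβ₀)
  have hne : C ((1 + X : K⟦X⟧) ^ (n - r)) ≠ 0 :=
    (map_ne_zero_iff C C_injective).mpr (pow_ne_zero _ one_add_X_ne_zero)
  have hresc : rescale (1 + X) Cser = C ((1 + X) ^ r) * H := by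
    refine mul_left_cancel₀ hne ?_
    calc C ((1 + X) ^ (n - r)) * rescale (1 + X) Cser
        = rescale (1 + X) (Fser β * Cser) * invOfUnit Gβ 1 := by
          rw [map_mul, hβ, mul_right_comm _ Gβ, mul_assoc _ Gβ, mul_invOfUnit _ _ (by simp [hGβ₀]),
            mul_one, mul_comm]
      _ = C ((1 + X) ^ (n - r)) * (C ((1 + X) ^ r) * H) := by
          rw [← hC, hα, ← mul_assoc, ← map_mul, ← pow_add, Nat.sub_add_cancel hrn, mul_assoc]
  intro k hk m hm
  refine mem_degreeLE_of_one_add_X_pow_mul_eq (hk.trans hdr) (hH k) ?_ m hm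
  simpa only [coeff_rescale, coeff_C_mul] using congrArg (coeff k) hresc

/-- if `r ≥ d`, then the image `C̄(t,u)` of `C(t,u) = F_α/F_β` in
`(K[t]/(t^{d+1}))[[u]]` is a polynomial in `u` of degree at most `r`; that is,
the coefficient of `t^k u^m` in `C(t,u)` vanishes whenever `k ≤ d` and `m > r`. -/
theorem Cser_trunc_polynomial_in_u [Field K] [CharZero K] {n r d : ℕ}
    (hrn : r ≤ n) (hdr : d ≤ r)
    (α : Fin n → K) (β : Fin (n - r) → K)
    (Cser : PowerSeries (PowerSeries K))
    (hC : Fser α = Fser β * Cser) :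
    ∀ k ≤ d, ∀ m : ℕ, r < m →
      PowerSeries.coeff m (PowerSeries.coeff k Cser) = 0 :=
  Cser_trunc_polynomial_in_u_general hrn hdr α β Cser hC
end

section
/- (Borel–Serre type formula for Lebelt polynomials.) For r = d, the coefficient of t^d in Σ_{p=0}^{d} (−1)^p L^p_{α,β} equals (−1)^d c_d, where c_d is the t^d-coefficient of E_α(t)/E_β(t) = ∏_{i=1}^n(1+α_i t)·∏_{i=1}^{n−d}(1−β_i t + β_i² t² − ⋯), computed in ℚ(α,β)[t]/(t^{d+1}). -/
/-!
Put `V = u/(1+u)`. Then `1 + u e^{γt} = (1+u)(1 + V(e^{γt} - 1))`, and the `t^k`-coefficient of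
the second factor is `γ^k/k! · V`, which agrees with the `t^k`-coefficient of `1 + γt` times `V^k`
modulo the span of the lower powers `V^m`, `m < k`. This congruence between a series `F(t)` and
`g(Vt)` is multiplicative and can be divided by a series with constant term 1, so
`C = (1+u)^d H` where the `t^d`-coefficient of `H` is `c_d V^d` plus lower powers of `V`.
Finally `(1+u)^d V^m = u^m (1+u)^{d-m}` is a polynomial of degree `d` in `u`, whose value at
`u = -1` is `0` for `m < d` and `(-1)^d` for `m = d`.
-/

open PowerSeries

variable {K : Type*}

namespace Lebelt

variable (K) [Field K]

noncomputable def V : K⟦X⟧ := X * (1 + X)⁻¹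

noncomputable def lowerVSpan (k : ℕ) : Submodule K K⟦X⟧ :=
  Submodule.span K ((V K ^ ·) '' Set.Iio k)

variable {K}

open Finset.HasAntidiagonal (antidiagonal mem_antidiagonal)

lemma one_add_X_mul_V : (1 + X) * V K = X := by
  rw [V, mul_left_comm, PowerSeries.mul_inv_cancel _ (by simp), mul_one]

lemma lowerVSpan_zero : lowerVSpan K 0 = ⊥ := by
  simp [lowerVSpan]

lemma V_pow_mem_lowerVSpan {m k : ℕ} (h : m < k) : V K ^ m ∈ lowerVSpan K k :=
  Submodule.subset_span ⟨m, h, rfl⟩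

lemma mul_mem_lowerVSpan {i j k : ℕ} (hk : i + j ≤ k + 1) {a b : K⟦X⟧}
    (ha : a ∈ lowerVSpan K i) (hb : b ∈ lowerVSpan K j) : a * b ∈ lowerVSpan K k := by
  have hle : lowerVSpan K i * lowerVSpan K j ≤ lowerVSpan K k := by
    rw [lowerVSpan, lowerVSpan, Submodule.span_mul_span]
    refine Submodule.span_mono ?_
    rintro _ ⟨_, ⟨m, hm, rfl⟩, _, ⟨l, hl, rfl⟩, rfl⟩
    exact ⟨m + l, by simp only [Set.mem_Iio] at *; omega, pow_add _ _ _⟩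
  exact hle (Submodule.mul_mem_mul ha hb)

/-- `F(t)` agrees with `g(V t)` up to lower powers of `V`, coefficientwise in `t`. -/
def VLeading (F : K⟦X⟧⟦X⟧) (g : K⟦X⟧) : Prop :=
  ∀ k, coeff k F - coeff k g • V K ^ k ∈ lowerVSpan K k

lemma sub_smul_V_pow_mem_of_mul {i j : ℕ} {a b : K⟦X⟧} {x y : K}
    (ha : a - x • V K ^ i ∈ lowerVSpan K i) (hb : b - y • V K ^ j ∈ lowerVSpan K j) :
    a * b - (x * y) • V K ^ (i + j) ∈ lowerVSpan K (i + j) := by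
  have hx : x • V K ^ i ∈ lowerVSpan K (i + 1) :=
    Submodule.smul_mem _ _ (V_pow_mem_lowerVSpan i.lt_succ_self)
  have hy : y • V K ^ j ∈ lowerVSpan K (j + 1) :=
    Submodule.smul_mem _ _ (V_pow_mem_lowerVSpan j.lt_succ_self)
  have hsplit : a * b - (x * y) • V K ^ (i + j) =
      (a - x • V K ^ i) * (b - y • V K ^ j) + x • V K ^ i * (b - y • V K ^ j)
        + (a - x • V K ^ i) * y • V K ^ j := by
    simp only [smul_eq_C_mul, map_mul, pow_add]
    ring
  rw [hsplit]
  exact add_mem (add_mem (mul_mem_lowerVSpan (by omega) ha hb)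
    (mul_mem_lowerVSpan (by omega) hx hb)) (mul_mem_lowerVSpan (by omega) ha hy)

lemma VLeading.mul {F F' : K⟦X⟧⟦X⟧} {g g' : K⟦X⟧} (hF : VLeading F g) (hF' : VLeading F' g') :
    VLeading (F * F') (g * g') := by
  intro k
  rw [coeff_mul, coeff_mul, Finset.sum_smul, ← Finset.sum_sub_distrib]
  refine Submodule.sum_mem _ fun p hp => ?_
  rw [← mem_antidiagonal.mp hp]
  exact sub_smul_V_pow_mem_of_mul (hF p.1) (hF' p.2)

lemma vLeading_one : VLeading (1 : K⟦X⟧⟦X⟧) 1 := by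
  rintro (_ | k)
  · simp
  · simp [coeff_one]

lemma vLeading_prod {ι : Type*} (s : Finset ι) {F : ι → K⟦X⟧⟦X⟧} {g : ι → K⟦X⟧}
    (h : ∀ i ∈ s, VLeading (F i) (g i)) : VLeading (∏ i ∈ s, F i) (∏ i ∈ s, g i) := by
  classical
  induction s using Finset.induction_on with
  | empty => simpa using vLeading_one
  | insert a s has ih =>
    rw [Finset.prod_insert has, Finset.prod_insert has]
    exact (h a (s.mem_insert_self a)).mul (ih fun i hi => h i (Finset.mem_insert_of_mem hi))

lemma VLeading.coeff_zero {F : K⟦X⟧⟦X⟧} {g : K⟦X⟧} (hF : VLeading F g) :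
    coeff 0 F = C (coeff 0 g) := by
  simpa [lowerVSpan_zero, sub_eq_zero, smul_eq_C_mul] using hF 0

lemma VLeading.of_mul_left {F H : K⟦X⟧⟦X⟧} {g h : K⟦X⟧} (hF : VLeading F g)
    (hFH : VLeading (F * H) (g * h)) (hg : constantCoeff g = 1) : VLeading H h := by
  classical
  have hg0 : coeff 0 g = 1 := by rwa [coeff_zero_eq_constantCoeff_apply]
  have hF0 : coeff 0 F = 1 := by rw [hF.coeff_zero, hg0, map_one]
  intro k
  induction k using Nat.strong_induction_on with
  | _ k ih =>
  have hk : (0, k) ∈ antidiagonal k := by simp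
  set S := (antidiagonal k).erase (0, k)
  have hrest : ∑ p ∈ S, (coeff p.1 F * coeff p.2 H - (coeff p.1 g * coeff p.2 h) • V K ^ k)
      ∈ lowerVSpan K k := by
    refine Submodule.sum_mem _ fun p hp => ?_
    obtain ⟨hp0, hpk⟩ := Finset.mem_erase.mp hp
    rw [mem_antidiagonal] at hpk
    have hp2 : p.2 < k := by
      by_contra! hle
      exact hp0 (Prod.ext (by simp; omega) (by simp; omega))
    rw [← hpk]
    exact sub_smul_V_pow_mem_of_mul (hF p.1) (ih p.2 hp2)
  have hsplit : coeff k (F * H) - coeff k (g * h) • V K ^ k =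
      (coeff k H - coeff k h • V K ^ k)
        + ∑ p ∈ S, (coeff p.1 F * coeff p.2 H - (coeff p.1 g * coeff p.2 h) • V K ^ k) := by
    rw [coeff_mul, coeff_mul, ← Finset.add_sum_erase _ _ hk, ← Finset.add_sum_erase _ _ hk,
      hF0, hg0, Finset.sum_sub_distrib, add_smul, Finset.sum_smul, one_mul, one_mul]
    abel
  exact (Submodule.add_mem_iff_left _ hrest).mp (hsplit ▸ hFH k)

variable (K) in
/-- `1 + V (e^{ct} - 1)`, the factor `(1 + u e^{ct}) / (1 + u)`. -/
noncomputable def expFactor (c : K) : K⟦X⟧⟦X⟧ :=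
  mk fun k => if k = 0 then 1 else (c ^ k / k.factorial) • V K

lemma vLeading_expFactor (c : K) : VLeading (expFactor K c) (1 + C c * X) := by
  rintro (_ | _ | k)
  · simp [expFactor]
  · simp [expFactor]
  · have hV : V K ∈ lowerVSpan K (k + 2) := by
      simpa using V_pow_mem_lowerVSpan (by omega : 1 < k + 2)
    simpa [expFactor, coeff_X] using Submodule.smul_mem _ _ hV

lemma Fser_eq {m : ℕ} (γ : Fin m → K) :
    Fser γ = C ((1 + X) ^ m) * ∏ i, expFactor K (γ i) := by
  have hfactor : ∀ c : K, (1 + mk fun k => (X : K⟦X⟧) * C (c ^ k / k.factorial)) =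
      C (1 + X) * expFactor K c := by
    intro c
    ext (_ | k) : 1
    · simp [expFactor]
    · rw [map_add, coeff_one, if_neg k.succ_ne_zero, zero_add, coeff_mk, expFactor, coeff_C_mul,
        coeff_mk, if_neg k.succ_ne_zero, smul_eq_C_mul, mul_left_comm, one_add_X_mul_V, mul_comm]
  simp only [Fser, hfactor, Finset.prod_mul_distrib, Finset.prod_const, Finset.card_univ,
    Fintype.card_fin, map_pow]

variable (K) in
noncomputable def truncEvalNegOne (d : ℕ) : K⟦X⟧ →ₗ[K] K :=
  ∑ p ∈ Finset.range (d + 1), (-1 : K) ^ p • coeff p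

lemma truncEvalNegOne_apply (d : ℕ) (f : K⟦X⟧) :
    truncEvalNegOne K d f = ∑ p ∈ Finset.range (d + 1), (-1 : K) ^ p * coeff p f := by
  simp [truncEvalNegOne]

lemma truncEvalNegOne_polynomial {d : ℕ} {q : Polynomial K} (hq : q.natDegree ≤ d) :
    truncEvalNegOne K d q = q.eval (-1) := by
  rw [truncEvalNegOne_apply, Polynomial.eval_eq_sum_range' (Nat.lt_succ_of_le hq)]
  simp only [Polynomial.coeff_coe, mul_comm]

lemma truncEvalNegOne_one_add_X_pow_mul_V_pow {d m : ℕ} (hm : m ≤ d) :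
    truncEvalNegOne K d ((1 + X) ^ d * V K ^ m) = (-1) ^ m * 0 ^ (d - m) := by
  have hpoly : ((1 + X) ^ d * V K ^ m : K⟦X⟧) =
      ((Polynomial.X ^ m * (1 + Polynomial.X) ^ (d - m) : Polynomial K) : K⟦X⟧) := by
    rw [← Nat.sub_add_cancel hm, pow_add, mul_assoc, ← mul_pow, one_add_X_mul_V,
      Nat.add_sub_cancel]
    push_cast
    ring
  have hdeg : (Polynomial.X ^ m * (1 + Polynomial.X) ^ (d - m) : Polynomial K).natDegree ≤ d := by
    refine Polynomial.natDegree_mul_le.trans ?_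
    rw [Polynomial.natDegree_X_pow, add_comm (1 : Polynomial K), ← Polynomial.C_1,
      Polynomial.natDegree_pow, Polynomial.natDegree_X_add_C]
    omega
  rw [hpoly, truncEvalNegOne_polynomial hdeg]
  simp

lemma truncEvalNegOne_of_sub_mem_lowerVSpan {d : ℕ} {f : K⟦X⟧} {e : K}
    (hf : f - e • V K ^ d ∈ lowerVSpan K d) :
    truncEvalNegOne K d ((1 + X) ^ d * f) = (-1) ^ d * e := by
  set φ := truncEvalNegOne K d ∘ₗ LinearMap.mulLeft K ((1 + X) ^ d)
  have hker : lowerVSpan K d ≤ LinearMap.ker φ := by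
    refine Submodule.span_le.mpr ?_
    rintro _ ⟨m, hm, rfl⟩
    rw [Set.mem_Iio] at hm
    simp [φ, truncEvalNegOne_one_add_X_pow_mul_V_pow hm.le, Nat.sub_ne_zero_of_lt hm]
  have hfe : φ f = φ (e • V K ^ d) := by
    rw [← sub_eq_zero, ← map_sub]
    exact hker hf
  calc truncEvalNegOne K d ((1 + X) ^ d * f) = φ (e • V K ^ d) := hfe
    _ = e * truncEvalNegOne K d ((1 + X) ^ d * V K ^ d) := by simp [φ]
    _ = (-1) ^ d * e := by
      rw [truncEvalNegOne_one_add_X_pow_mul_V_pow le_rfl, Nat.sub_self, pow_zero, mul_one,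
        mul_comm]

lemma prod_expFactor_mul_eq {n d : ℕ} (hdn : d ≤ n) {α : Fin n → K} {β : Fin (n - d) → K}
    {Cser : K⟦X⟧⟦X⟧} (hC : Fser α = Fser β * Cser) :
    (∏ j, expFactor K (β j)) * (C ((1 + X)⁻¹ ^ d) * Cser) = ∏ i, expFactor K (α i) := by
  rw [Fser_eq, Fser_eq, map_pow, map_pow] at hC
  rw [map_pow]
  set w : K⟦X⟧⟦X⟧ := C (1 + X)
  set w' : K⟦X⟧⟦X⟧ := C (1 + X)⁻¹
  have hw : w * w' = 1 := by rw [← map_mul, PowerSeries.mul_inv_cancel _ (by simp), map_one]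
  have hpow : w ^ n = w ^ (n - d) * w ^ d := by rw [← pow_add, Nat.sub_add_cancel hdn]
  calc (∏ j, expFactor K (β j)) * (w' ^ d * Cser)
      = (w * w') ^ (n - d) * ((∏ j, expFactor K (β j)) * (w' ^ d * Cser)) := by
        rw [hw, one_pow, one_mul]
    _ = w' ^ (n - d) * w' ^ d * (w ^ (n - d) * (∏ j, expFactor K (β j)) * Cser) := by ring
    _ = (w * w') ^ (n - d) * (w * w') ^ d * ∏ i, expFactor K (α i) := by
        rw [← hC, hpow]
        ring
    _ = ∏ i, expFactor K (α i) := by rw [hw, one_pow, one_pow, one_mul, one_mul]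

end Lebelt

open Lebelt in
theorem Lebelt_BorelSerre_general [Field K] {n d : ℕ} (hdn : d ≤ n)
    (α : Fin n → K) (β : Fin (n - d) → K)
    (Cser : PowerSeries (PowerSeries K))
    (hC : Fser α = Fser β * Cser)
    (Eq' : PowerSeries K)
    (hE : (∏ j : Fin (n - d), (1 + PowerSeries.C (β j) * PowerSeries.X)) * Eq' =
      ∏ i : Fin n, (1 + PowerSeries.C (α i) * PowerSeries.X)) :
    ∑ p ∈ Finset.range (d + 1),
        (-1 : K) ^ p * PowerSeries.coeff p (PowerSeries.coeff d Cser) =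
      (-1 : K) ^ d * PowerSeries.coeff d Eq' := by
  set H := C ((1 + X)⁻¹ ^ d) * Cser
  have hβ := vLeading_prod Finset.univ fun j _ => vLeading_expFactor (β j)
  have hα := vLeading_prod Finset.univ fun i _ => vLeading_expFactor (α i)
  rw [← prod_expFactor_mul_eq hdn hC, ← hE] at hα
  have hH : VLeading H Eq' := hβ.of_mul_left hα (by simp [map_prod])
  have hCser : coeff d Cser = (1 + X) ^ d * coeff d H := by
    rw [coeff_C_mul, ← mul_assoc, ← mul_pow, PowerSeries.mul_inv_cancel _ (by simp), one_pow,
      one_mul]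
  rw [← truncEvalNegOne_apply, hCser]
  exact truncEvalNegOne_of_sub_mem_lowerVSpan (hH d)

/-- Borel–Serre type formula for Lebelt polynomials: for `r = d`,
the `t^d`-coefficient of `Σ_{p=0}^d (-1)^p L^p_{α,β}` equals `(-1)^d c_d`,
where `c_d` is the `t^d`-coefficient of `E_α(t)/E_β(t)`.  Here `L^p_{α,β}` is
the `u^p`-coefficient of `C = F_α/F_β` (given by `F_α = F_β ⬝ Cser`), and the
quotient `E_α(t)/E_β(t)` is given by `(∏_j (1+β_j t)) ⬝ Eq = ∏_i (1+α_i t)`. -/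
theorem Lebelt_BorelSerre [Field K] [CharZero K] {n d : ℕ} (hdn : d ≤ n)
    (α : Fin n → K) (β : Fin (n - d) → K)
    (Cser : PowerSeries (PowerSeries K))
    (hC : Fser α = Fser β * Cser)
    (Eq' : PowerSeries K)
    (hE : (∏ j : Fin (n - d), (1 + PowerSeries.C (β j) * PowerSeries.X)) * Eq' =
      ∏ i : Fin n, (1 + PowerSeries.C (α i) * PowerSeries.X)) :
    ∑ p ∈ Finset.range (d + 1),
        (-1 : K) ^ p * PowerSeries.coeff p (PowerSeries.coeff d Cser) =
      (-1 : K) ^ d * PowerSeries.coeff d Eq' :=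
  Lebelt_BorelSerre_general hdn α β Cser hC Eq' hE
end
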